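/- Let A, B, C, C' be commutative rings with homomorphisms f♯ : C → B, α : C → C' such that α becomes an isomorphism after inverting π (α ⊗ K is an isomorphism, K = Frac(R), π a non-zerodivisor), and suppose the π-adic completion (f♯)^ : Ĉ → B̂ factors as θ̂ ∘ α̂ for some θ̂ : Ĉ' → B̂. If B is π-adically separated and B = B̂ ∩ (B ⊗ K) inside B̂ ⊗ K, then θ̂ ∘ ι_{C'} has image in B, i.e., f♯ factors through α by a homomorphism C' → B. -/

import Mathlib

/-- The `I`-adic completion of a commutative ring `B`, realized as the subring of
compatible families in `Π n, B ⧸ I ^ n`. -/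
def AdicCpl {B : Type*} [CommRing B] (I : Ideal B) : Subring (∀ n : ℕ, B ⧸ I ^ n) where
  carrier := {x | ∀ ⦃m n : ℕ⦄ (h : m ≤ n),
    Ideal.Quotient.factor (S := I ^ n) (T := I ^ m) (Ideal.pow_le_pow_right h) (x n) = x m}
  mul_mem' {x y} hx hy := by
    intro m n h
    rw [Pi.mul_apply, Pi.mul_apply, _root_.map_mul, hx h, hy h]
  one_mem' := by
    intro m n h
    rw [Pi.one_apply, Pi.one_apply, _root_.map_one]
  add_mem' {x y} hx hy := by
    intro m n h
    rw [Pi.add_apply, Pi.add_apply, _root_.map_add, hx h, hy h]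
  zero_mem' := by
    intro m n h
    rw [Pi.zero_apply, Pi.zero_apply, _root_.map_zero]
  neg_mem' {x} hx := by
    intro m n h
    rw [Pi.neg_apply, Pi.neg_apply, _root_.map_neg, hx h]

/-- The canonical ring homomorphism from `B` to its `I`-adic completion. -/
def toAdicCpl {B : Type*} [CommRing B] (I : Ideal B) : B →+* AdicCpl I where
  toFun b := ⟨fun n => Ideal.Quotient.mk (I ^ n) b, fun m n h => Ideal.Quotient.factor_mk _ b⟩
  map_one' := Subtype.ext (funext fun n => _root_.map_one _)
  map_mul' a b := Subtype.ext (funext fun n => _root_.map_mul _ a b)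
  map_zero' := Subtype.ext (funext fun n => _root_.map_zero _)
  map_add' a b := Subtype.ext (funext fun n => _root_.map_add _ a b)

/-- Functoriality of the adic completion along a ring homomorphism. -/
def adicCplMap {B C : Type*} [CommRing B] [CommRing C] (I : Ideal B) (φ : B →+* C) :
    AdicCpl I →+* AdicCpl (I.map φ) where
  toFun x := ⟨fun n => Ideal.quotientMap ((I.map φ) ^ n) φ
      (by rw [← Ideal.map_pow]; exact Ideal.le_comap_map) (x.1 n), by
    intro m n h
    obtain ⟨b, hb⟩ := Ideal.Quotient.mk_surjective (x.1 n)
    have h2 : (x.1 m) = Ideal.Quotient.mk (I ^ m) b := by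
      rw [← x.2 h, ← hb, Ideal.Quotient.factor_mk]
    show Ideal.Quotient.factor _ (Ideal.quotientMap _ φ _ (x.1 n))
      = Ideal.quotientMap _ φ _ (x.1 m)
    rw [← hb, h2, Ideal.quotientMap_mk, Ideal.Quotient.factor_mk, Ideal.quotientMap_mk]⟩
  map_one' := Subtype.ext (funext fun n => by
    show Ideal.quotientMap _ φ _ 1 = 1
    exact _root_.map_one _)
  map_mul' a b := Subtype.ext (funext fun n => by
    show Ideal.quotientMap _ φ _ (a.1 n * b.1 n) = _
    exact _root_.map_mul _ _ _)
  map_zero' := Subtype.ext (funext fun n => by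
    show Ideal.quotientMap _ φ _ 0 = 0
    exact _root_.map_zero _)
  map_add' a b := Subtype.ext (funext fun n => by
    show Ideal.quotientMap _ φ _ (a.1 n + b.1 n) = _
    exact _root_.map_add _ _ _)

/-- Functoriality of the adic completion, with a specified target ideal. -/
def adicCplMap' {B C : Type*} [CommRing B] [CommRing C] (I : Ideal B) (J : Ideal C)
    (φ : B →+* C) (h : I.map φ = J) : AdicCpl I →+* AdicCpl J :=
  h ▸ adicCplMap I φ

/-!
Since `α ⊗ K` is onto and `K` is `R[1/π]`, every `c' ∈ C'` satisfies `α c = π ^ n • c'` for some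
`c ∈ C`. Then `π ^ n * θ̂ c' = θ̂ (α̂ c) = f♯ c` lies in `B`, so `θ̂ c' ∈ B` by `B = B̂ ∩ (B ⊗ K)`.
As `B → B̂` is injective, the resulting map `C' → B` is a ring homomorphism, and `θ ∘ α = f♯`
can be checked in `B̂`.
-/

open TensorProduct

theorem IsLocalizedModule.exists_apply_eq_smul_of_surjective {R M M' N N' : Type*}
    [CommSemiring R] (S : Submonoid R)
    [AddCommMonoid M] [AddCommMonoid M'] [AddCommMonoid N] [AddCommMonoid N']
    [Module R M] [Module R M'] [Module R N] [Module R N']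
    (f : M →ₗ[R] M') (g : N →ₗ[R] N') [IsLocalizedModule S f] [IsLocalizedModule S g]
    (h : M →ₗ[R] N) (h' : M' →ₗ[R] N') (hcomm : h' ∘ₗ f = g ∘ₗ h)
    (hsurj : Function.Surjective h') (n : N) :
    ∃ s ∈ S, ∃ m, h m = s • n := by
  obtain ⟨x, hx⟩ := hsurj (g n)
  obtain ⟨⟨m, s⟩, hs⟩ := IsLocalizedModule.surj S f x
  have : g (h m) = g ((s : R) • n) := by
    rw [← LinearMap.comp_apply, ← hcomm, LinearMap.comp_apply, ← hs, Submonoid.smul_def,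
      map_smul, hx, map_smul]
  obtain ⟨t, ht⟩ := IsLocalizedModule.exists_of_eq (S := S) this
  refine ⟨t * s, S.mul_mem t.2 s.2, (t : R) • m, ?_⟩
  rw [map_smul, ← Submonoid.smul_def, ht, Submonoid.smul_def, smul_smul]

instance IsLocalization.tensorProduct_flip_isLocalizedModule {R M : Type*} [CommSemiring R] (S : Submonoid R)
    (A : Type*) [CommSemiring A] [Algebra R A] [IsLocalization S A]
    [AddCommMonoid M] [Module R M] :
    IsLocalizedModule S ((TensorProduct.mk R M A).flip 1) := by
  have : (TensorProduct.mk R M A).flip 1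
      = (TensorProduct.comm R A M).toLinearMap ∘ₗ TensorProduct.mk R A M 1 := by
    ext; rfl
  rw [this]
  infer_instance

theorem IsDiscreteValuationRing.exists_dvd_pow {R : Type*} [CommRing R] [IsDomain R]
    [IsDiscreteValuationRing R] {π : R} (hπ : Irreducible π) {s : R} (hs : s ≠ 0) :
    ∃ n : ℕ, s ∣ π ^ n := by
  obtain ⟨n, u, rfl⟩ := IsDiscreteValuationRing.eq_unit_mul_pow_irreducible hs hπ
  exact ⟨n, Units.mul_left_dvd.2 dvd_rfl⟩

theorem RingHom.exists_comp_eq_of_forall_mem_range {A B C : Type*} [Ring A] [Ring B] [Ring C]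
    {i : B →+* C} (hi : Function.Injective i) {g : A →+* C} (hg : ∀ a, g a ∈ i.range) :
    ∃ θ : A →+* B, i.comp θ = g := by
  let e := RingEquiv.ofLeftInverse (Function.leftInverse_invFun hi)
  refine ⟨(e.symm : i.range →+* B).comp (g.codRestrict i.range hg), RingHom.ext fun a => ?_⟩
  exact congrArg Subtype.val (e.apply_symm_apply ⟨g a, hg a⟩)

theorem exists_apply_eq_pow_smul_of_rTensor_surjective {R M N : Type*} [CommRing R] [IsDomain R]
    [IsDiscreteValuationRing R] {π : R} (hπ : Irreducible π)
    [AddCommMonoid M] [AddCommMonoid N] [Module R M] [Module R N] (f : M →ₗ[R] N)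
    (hf : Function.Surjective (f.rTensor (FractionRing R))) (n : N) :
    ∃ (k : ℕ) (m : M), f m = π ^ k • n := by
  obtain ⟨s, hs, m, hm⟩ := IsLocalizedModule.exists_apply_eq_smul_of_surjective
    (nonZeroDivisors R) ((TensorProduct.mk R M (FractionRing R)).flip 1)
    ((TensorProduct.mk R N (FractionRing R)).flip 1) f _ (LinearMap.ext fun _ => rfl) hf n
  obtain ⟨k, r, hr⟩ := IsDiscreteValuationRing.exists_dvd_pow hπ (nonZeroDivisors.ne_zero hs)
  exact ⟨k, r • m, by rw [map_smul, hm, smul_smul, hr, mul_comm]⟩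

theorem adicCplMap'_comp_toAdicCpl {B C : Type*} [CommRing B] [CommRing C] (I : Ideal B)
    (J : Ideal C) (φ : B →+* C) (h : I.map φ = J) :
    (adicCplMap' I J φ h).comp (toAdicCpl I) = (toAdicCpl J).comp φ := by
  subst h
  exact RingHom.ext fun _ => Subtype.ext (funext fun _ => Ideal.quotientMap_mk)

theorem completion_factorization_descends_general
    {R : Type*} [CommRing R] [IsDomain R] [IsDiscreteValuationRing R]
    (π : R) (hπ : Irreducible π)
    {B C C' : Type*} [CommRing B] [CommRing C] [CommRing C']
    [Algebra R B] [Algebra R C] [Algebra R C']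
    (fs : C →ₐ[R] B) (α : C →ₐ[R] C')
    (hαK : Function.Bijective
      (Algebra.TensorProduct.map α (AlgHom.id R (FractionRing R)) :
        C ⊗[R] FractionRing R →ₐ[R] C' ⊗[R] FractionRing R))
    (hmapα : (Ideal.span {algebraMap R C π}).map (α : C →+* C')
      = Ideal.span {algebraMap R C' π})
    (hmapf : (Ideal.span {algebraMap R C π}).map (fs : C →+* B)
      = Ideal.span {algebraMap R B π})
    (θhat : AdicCpl (Ideal.span {algebraMap R C' π}) →+*
      AdicCpl (Ideal.span {algebraMap R B π}))
    (hfactor : adicCplMap' _ _ (fs : C →+* B) hmapf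
      = θhat.comp (adicCplMap' _ _ (α : C →+* C') hmapα))
    (hsep : Function.Injective (toAdicCpl (Ideal.span {algebraMap R B π})))
    (hint : ∀ (bhat : AdicCpl (Ideal.span {algebraMap R B π})) (c : B) (n : ℕ),
      toAdicCpl _ c = (toAdicCpl _ (algebraMap R B π)) ^ n * bhat →
      ∃ b : B, toAdicCpl _ b = bhat ∧ (algebraMap R B π) ^ n * b = c) :
    ∃ θ : C' →+* B,
      (toAdicCpl (Ideal.span {algebraMap R B π})).comp θ
        = θhat.comp (toAdicCpl (Ideal.span {algebraMap R C' π})) ∧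
      θ.comp (α : C →+* C') = (fs : C →+* B) := by
  set ιB := toAdicCpl (Ideal.span {algebraMap R B π})
  set ιC' := toAdicCpl (Ideal.span {algebraMap R C' π})
  have hnat : ιB.comp (fs : C →+* B) = (θhat.comp ιC').comp α := by
    rw [← adicCplMap'_comp_toAdicCpl _ _ _ hmapf, hfactor, RingHom.comp_assoc,
      adicCplMap'_comp_toAdicCpl, RingHom.comp_assoc]
  have hθπ : θhat (ιC' (algebraMap R C' π)) = ιB (algebraMap R B π) := by
    simpa using (RingHom.congr_fun hnat (algebraMap R C π)).symm
  have hrange : ∀ c', (θhat.comp ιC') c' ∈ ιB.range := by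
    intro c'
    obtain ⟨n, c, hc⟩ := exists_apply_eq_pow_smul_of_rTensor_surjective hπ α.toLinearMap
      hαK.2 c'
    have hfs : ιB (fs c) = ιB (algebraMap R B π) ^ n * θhat (ιC' c') := by
      have hα : α c = π ^ n • c' := hc
      rw [show ιB (fs c) = θhat (ιC' (α c)) from RingHom.congr_fun hnat c, hα,
        Algebra.smul_def, map_pow, map_mul, map_mul, map_pow, map_pow, hθπ]
    obtain ⟨b, hb, -⟩ := hint _ _ n hfs
    exact ⟨b, hb⟩
  obtain ⟨θ, hθ⟩ := RingHom.exists_comp_eq_of_forall_mem_range hsep hrange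
  refine ⟨θ, hθ, (RingHom.cancel_left hsep).1 ?_⟩
  rw [← RingHom.comp_assoc, hθ, hnat]

open TensorProduct in
/-- Let `R` be a complete DVR with uniformizer `π` and fraction field
`K`, and let `B, C, C'` be `R`-algebras with `f♯ : C → B` and `α : C → C'` such that
`α ⊗ K` is an isomorphism.  Suppose the `π`-adic completion of `f♯` factors as
`θ̂ ∘ α̂` for some `θ̂ : Ĉ' → B̂`.  If `B` is `π`-adically separated and
`B = B̂ ∩ (B ⊗ K)` (an element of `B ⊗ K` whose image lies in `B̂` lies in `B`), then
`θ̂ ∘ ι_{C'}` has image in `B`; i.e. `f♯` factors through `α` by a homomorphism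
`C' → B`. -/
theorem completion_factorization_descends
    {R : Type*} [CommRing R] [IsDomain R] [IsDiscreteValuationRing R]
    (π : R) (hπ : Irreducible π) [IsAdicComplete (Ideal.span {π}) R]
    {B C C' : Type*} [CommRing B] [CommRing C] [CommRing C']
    [Algebra R B] [Algebra R C] [Algebra R C']
    (fs : C →ₐ[R] B) (α : C →ₐ[R] C')
    (hαK : Function.Bijective
      (Algebra.TensorProduct.map α (AlgHom.id R (FractionRing R)) :
        C ⊗[R] FractionRing R →ₐ[R] C' ⊗[R] FractionRing R))
    (hmapα : (Ideal.span {algebraMap R C π}).map (α : C →+* C')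
      = Ideal.span {algebraMap R C' π})
    (hmapf : (Ideal.span {algebraMap R C π}).map (fs : C →+* B)
      = Ideal.span {algebraMap R B π})
    (θhat : AdicCpl (Ideal.span {algebraMap R C' π}) →+*
      AdicCpl (Ideal.span {algebraMap R B π}))
    (hfactor : adicCplMap' _ _ (fs : C →+* B) hmapf
      = θhat.comp (adicCplMap' _ _ (α : C →+* C') hmapα))
    (hsep : Function.Injective (toAdicCpl (Ideal.span {algebraMap R B π})))
    (hint : ∀ (bhat : AdicCpl (Ideal.span {algebraMap R B π})) (c : B) (n : ℕ),
      toAdicCpl _ c = (toAdicCpl _ (algebraMap R B π)) ^ n * bhat →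
      ∃ b : B, toAdicCpl _ b = bhat ∧ (algebraMap R B π) ^ n * b = c) :
    ∃ θ : C' →+* B,
      (toAdicCpl (Ideal.span {algebraMap R B π})).comp θ
        = θhat.comp (toAdicCpl (Ideal.span {algebraMap R C' π})) ∧
      θ.comp (α : C →+* C') = (fs : C →+* B) :=
  completion_factorization_descends_general π hπ fs α hαK hmapα hmapf θhat hfactor hsep hint
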